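/- Let G be an amenable group with Følner net F = (F_j)_{j∈J}, and let A and B be finite sets. Suppose X ⊆ A^G and Y ⊆ B^G are subshifts with X strongly irreducible, and let τ : X → Y be a pre-injective cellular automaton. Then ent_F(τ(X)) = ent_F(X). -/

import Mathlib

open Pointwise Filter

variable {G : Type*} [Group G]

/-- The shift action of `G` on configurations: `(g • x)(h) = x(g⁻¹h)`. -/
def shift {A : Type*} (g : G) (x : G → A) : G → A := fun h => x (g⁻¹ * h)

/-- A subshift: a closed, shift-invariant subset of `A^G` (prodiscrete topology). -/
def IsSubshift {A : Type*} [TopologicalSpace A] (X : Set (G → A)) : Prop :=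
  IsClosed X ∧ ∀ g : G, ∀ x ∈ X, shift g x ∈ X

/-- The `Δ`-neighborhood `Ω^{+Δ} = ΩΔ⁻¹ = {g : gΔ ∩ Ω ≠ ∅}`. -/
def plusNbhd (Ω Δ : Set G) : Set G := {g : G | ∃ d ∈ Δ, g * d ∈ Ω}

/-- `Δ`-irreducibility of a subshift. -/
def DeltaIrreducible {A : Type*} (Δ : Finset G) (X : Set (G → A)) : Prop :=
  ∀ Ω₁ Ω₂ : Finset G,
    plusNbhd (Ω₁ : Set G) (Δ : Set G) ∩ (Ω₂ : Set G) = ∅ →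
    ∀ x₁ ∈ X, ∀ x₂ ∈ X,
      ∃ x ∈ X, (∀ g ∈ Ω₁, x g = x₁ g) ∧ (∀ g ∈ Ω₂, x g = x₂ g)

/-- Strong irreducibility: `Δ`-irreducible for some finite `Δ ⊆ G`. -/
def StronglyIrreducible {A : Type*} (X : Set (G → A)) : Prop :=
  ∃ Δ : Finset G, DeltaIrreducible Δ X

/-- A cellular automaton between subshifts `X ⊆ A^G` and `Y ⊆ B^G`:
a map that sends `X` into `Y`, is continuous on `X`, and is `G`-equivariant on `X`. -/
def IsCellularAutomaton {A B : Type*} [TopologicalSpace A] [TopologicalSpace B]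
    (X : Set (G → A)) (Y : Set (G → B)) (τ : (G → A) → (G → B)) : Prop :=
  Set.MapsTo τ X Y ∧ ContinuousOn τ X ∧ ∀ g : G, ∀ x ∈ X, τ (shift g x) = shift g (τ x)

/-- Pre-injectivity of a map on a subshift `X`. -/
def PreInjective {A B : Type*} (X : Set (G → A)) (τ : (G → A) → (G → B)) : Prop :=
  ∀ x₁ ∈ X, ∀ x₂ ∈ X, {g : G | x₁ g ≠ x₂ g}.Finite → τ x₁ = τ x₂ → x₁ = x₂

/-- A Følner net for `G`, indexed by a directed preorder `J`. -/
def IsFolnerNet {J : Type*} [Preorder J] (F : J → Finset G) : Prop :=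
  (∀ j, (F j).Nonempty) ∧
  ∀ E : Finset G,
    Tendsto (fun j => ((plusNbhd (F j : Set G) (E : Set G) \ (F j : Set G)).ncard : ℝ) /
        ((F j).card : ℝ)) atTop (nhds 0)

/-- The entropy of a subset `X ⊆ A^G` with respect to a Følner net `F`. -/
noncomputable def entropy {J A : Type*} [Preorder J] (F : J → Finset G) (X : Set (G → A)) : ℝ :=
  limsup (fun j => Real.log (((Set.restrict (F j : Set G)) '' X).ncard : ℝ) / ((F j).card : ℝ))
    atTop

/-- Topological mixing for a subshift (open subsets of `X` are traces of ambient opens). -/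
def TopologicallyMixing {A : Type*} [TopologicalSpace A] (X : Set (G → A)) : Prop :=
  ∀ U V : Set (G → A), IsOpen U → IsOpen V → (U ∩ X).Nonempty → (V ∩ X).Nonempty →
    ∃ F : Finset G, ∀ g : G, g ∉ F → ((U ∩ X) ∩ (shift g '' (V ∩ X))).Nonempty

/-- An `(E,E')`-tiling. -/
def IsTiling (E E' T : Set G) : Prop :=
  T.PairwiseDisjoint (fun g => g • E) ∧ (⋃ g ∈ T, g • E') = Set.univ

set_option linter.deprecated false

/-! A memory set `M` of `τ` gives `|τ(X)_Ω| ≤ |X_{ΩM}|`, so `τ` does not increase entropy.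
Conversely, strong irreducibility, extended to infinite regions by compactness, realises every
pattern of `X` on `Ω` by a configuration that agrees with a fixed `x₀ ∈ X` outside `ΩΔ⁻¹`. The
images of two such configurations agree outside `ΩΔ⁻¹M⁻¹`, so by pre-injectivity distinct
patterns give images that differ on `ΩΔ⁻¹M⁻¹`, whence `|X_Ω| ≤ |τ(X)_{ΩΔ⁻¹M⁻¹}|`. Enlarging
`Ω` to `ΩE` changes the logarithm of a pattern count by `O(|ΩE \ Ω|)`, which is `o(|Ω|)` along
a Følner net. -/

open Set Topology

theorem ncard_image_le_of_factorsThrough {α β γ : Type*} {s : Set α} {φ : α → β} {ψ : α → γ}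
    (hψ : (ψ '' s).Finite) (h : ∀ x ∈ s, ∀ y ∈ s, ψ x = ψ y → φ x = φ y) :
    (φ '' s).ncard ≤ (ψ '' s).ncard := by
  rcases s.eq_empty_or_nonempty with rfl | ⟨a, -⟩
  · simp
  have : Nonempty α := ⟨a⟩
  refine ncard_le_ncard_of_injOn (ψ ∘ Function.invFunOn φ s) ?_ ?_ hψ
  · rintro _ ⟨x, hx, rfl⟩
    exact mem_image_of_mem ψ (Function.invFunOn_mem ⟨x, hx, rfl⟩)
  · rintro _ ⟨x, hx, rfl⟩ _ ⟨y, hy, rfl⟩ hxy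
    rw [← Function.invFunOn_eq (f := φ) ⟨x, hx, rfl⟩,
      ← Function.invFunOn_eq (f := φ) ⟨y, hy, rfl⟩]
    exact h _ (Function.invFunOn_mem ⟨x, hx, rfl⟩) _ (Function.invFunOn_mem ⟨y, hy, rfl⟩) hxy

theorem log_natCast_le_log_natCast {m n : ℕ} (h : m ≤ n) : Real.log m ≤ Real.log n := by
  rcases m.eq_zero_or_pos with rfl | hm
  · simpa using Real.log_natCast_nonneg n
  · exact Real.log_le_log (by exact_mod_cast hm) (by exact_mod_cast h)

theorem limsup_le_limsup_of_le_add {ι : Type*} {f : Filter ι} [f.NeBot] {u v w : ι → ℝ}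
    (hu : f.IsBoundedUnder (· ≥ ·) u) (hv : f.IsBoundedUnder (· ≤ ·) v)
    (hv' : f.IsBoundedUnder (· ≥ ·) v) (hw : Tendsto w f (𝓝 0))
    (h : ∀ᶠ i in f, u i ≤ v i + w i) :
    limsup u f ≤ limsup v f :=
  calc limsup u f ≤ limsup (v + w) f :=
        limsup_le_limsup h hu.isCoboundedUnder_le (isBoundedUnder_le_add hv hw.isBoundedUnder_le)
    _ ≤ limsup v f + limsup w f :=
        limsup_add_le hv' hv hw.isBoundedUnder_ge.isCoboundedUnder_le hw.isBoundedUnder_le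
    _ = limsup v f := by rw [hw.limsup_eq, add_zero]

theorem IsCompact.exists_finset_eq_of_continuousOn {ι A B : Type*} [TopologicalSpace A]
    [DiscreteTopology A] [TopologicalSpace B] [DiscreteTopology B] {X : Set (ι → A)}
    (hX : IsCompact X) {f : (ι → A) → B} (hf : ContinuousOn f X) :
    ∃ M : Finset ι, ∀ x ∈ X, ∀ x' ∈ X, (∀ i ∈ M, x i = x' i) → f x = f x' := by
  classical
  have hlocal : ∀ x ∈ X, ∃ S : Finset ι, ∀ y ∈ X, (∀ i ∈ S, y i = x i) → f y = f x := by
    intro x hx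
    obtain ⟨U, hU, hxU, hUX⟩ :=
      mem_nhdsWithin.mp (hf x hx ((isOpen_discrete {f x}).mem_nhds rfl))
    obtain ⟨S, u, hu, hSU⟩ := isOpen_pi_iff.mp hU x hxU
    exact ⟨S, fun y hy hyx => hUX ⟨hSU fun i hi => hyx i hi ▸ (hu i hi).2, hy⟩⟩
  choose S hS using hlocal
  obtain ⟨t, hXt⟩ := hX.elim_nhds_subcover' (fun x hx => (S x hx : Set ι).pi fun i => {x i})
    fun x hx => (isOpen_set_pi (S x hx).finite_toSet fun i _ => isOpen_discrete _).mem_nhds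
      fun i _ => rfl
  refine ⟨t.biUnion fun y => S y y.2, fun x hx x' hx' hxx' => ?_⟩
  obtain ⟨y, hyt, hxy⟩ := mem_iUnion₂.mp (hXt hx)
  have hx'y : ∀ i ∈ S y y.2, x' i = (y : ι → A) i := fun i hi =>
    (hxx' i (Finset.mem_biUnion.mpr ⟨y, hyt, hi⟩)).symm.trans (hxy i hi)
  rw [hS y y.2 x hx hxy, hS y y.2 x' hx' hx'y]

theorem plusNbhd_eq_mul_inv (Ω Δ : Set G) : plusNbhd Ω Δ = Ω * Δ⁻¹ := by
  ext g
  simp only [plusNbhd, mem_setOf_eq, Set.mem_mul, Set.mem_inv]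
  constructor
  · rintro ⟨d, hd, hgd⟩
    exact ⟨g * d, hgd, d⁻¹, by simpa using hd, by group⟩
  · rintro ⟨a, ha, e, he, rfl⟩
    exact ⟨e⁻¹, he, by simpa using ha⟩

theorem IsFolnerNet.tendsto_card_mul_sdiff_div [DecidableEq G] {J : Type*} [Preorder J]
    {F : J → Finset G} (hF : IsFolnerNet F) (E : Finset G) :
    Tendsto (fun j => (((F j * E) \ F j).card : ℝ) / (F j).card) atTop (𝓝 0) := by
  refine (hF.2 E⁻¹).congr fun j => ?_
  rw [plusNbhd_eq_mul_inv, Finset.coe_inv, inv_inv, ← Finset.coe_mul, ← Finset.coe_sdiff,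
    ncard_coe_finset]

section PatternCounting

variable {ι A : Type*} [Finite A]

theorem ncard_restrict_image_le_mul [DecidableEq ι] (Z : Set (ι → A)) {Ω Ω' : Finset ι}
    (h : Ω ⊆ Ω') :
    (restrict ↑Ω' '' Z).ncard ≤ (restrict ↑Ω '' Z).ncard * Nat.card A ^ (Ω' \ Ω).card := by
  let split : (↑Ω' → A) → (↑Ω → A) × (↑(Ω' \ Ω) → A) := fun q =>
    (fun i => q ⟨i, h i.2⟩, fun i => q ⟨i, (Finset.mem_sdiff.mp i.2).1⟩)
  have hsplit : Function.Injective split := fun q q' hqq' => funext fun i => by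
    by_cases hi : (i : ι) ∈ Ω
    · exact congrFun (congrArg Prod.fst hqq') ⟨i, hi⟩
    · exact congrFun (congrArg Prod.snd hqq') ⟨i, Finset.mem_sdiff.mpr ⟨i.2, hi⟩⟩
  calc (restrict ↑Ω' '' Z).ncard ≤ ((restrict ↑Ω '' Z) ×ˢ univ).ncard := by
        refine ncard_le_ncard_of_injOn split ?_ hsplit.injOn (toFinite _)
        rintro _ ⟨z, hz, rfl⟩
        exact ⟨⟨z, hz, rfl⟩, mem_univ _⟩
    _ = (restrict ↑Ω '' Z).ncard * Nat.card A ^ (Ω' \ Ω).card := by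
        rw [ncard_prod, ncard_univ, Nat.card_fun, Nat.card_eq_finsetCard]

theorem log_ncard_restrict_image_le_add [DecidableEq ι] (Z : Set (ι → A)) {Ω Ω' : Finset ι}
    (h : Ω ⊆ Ω') :
    Real.log (restrict ↑Ω' '' Z).ncard ≤
      Real.log (restrict ↑Ω '' Z).ncard + (Ω' \ Ω).card * Real.log (Nat.card A) := by
  have hle := ncard_restrict_image_le_mul Z h
  rcases Nat.eq_zero_or_pos (restrict ↑Ω' '' Z).ncard with h0 | hpos
  · rw [h0, Nat.cast_zero, Real.log_zero]
    exact add_nonneg (Real.log_natCast_nonneg _)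
      (mul_nonneg (Nat.cast_nonneg _) (Real.log_natCast_nonneg _))
  · obtain ⟨hn, ha⟩ := mul_ne_zero_iff.mp (hpos.trans_le hle).ne'
    calc Real.log (restrict ↑Ω' '' Z).ncard
        ≤ Real.log ((restrict ↑Ω '' Z).ncard * Nat.card A ^ (Ω' \ Ω).card : ℕ) :=
          log_natCast_le_log_natCast hle
      _ = _ := by
          rw [Nat.cast_mul, Nat.cast_pow, Real.log_mul (by exact_mod_cast hn)
            (by exact_mod_cast ha), Real.log_pow]

theorem log_ncard_restrict_image_div_card_mem_Icc (Z : Set (ι → A)) (Ω : Finset ι) :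
    Real.log (restrict ↑Ω '' Z).ncard / Ω.card ∈ Icc 0 (Real.log (Nat.card A)) := by
  refine ⟨div_nonneg (Real.log_natCast_nonneg _) (Nat.cast_nonneg _),
    div_le_of_le_mul₀ (Nat.cast_nonneg _) (Real.log_natCast_nonneg _) ?_⟩
  have hle : (restrict ↑Ω '' Z).ncard ≤ Nat.card A ^ Ω.card := by
    simpa [Nat.card_fun] using ncard_le_card (restrict ↑Ω '' Z)
  calc Real.log (restrict ↑Ω '' Z).ncard ≤ Real.log (Nat.card A ^ Ω.card : ℕ) :=
        log_natCast_le_log_natCast hle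
    _ = Real.log (Nat.card A) * Ω.card := by rw [Nat.cast_pow, Real.log_pow, mul_comm]

end PatternCounting

theorem entropy_le_entropy_of_ncard_restrict_le {A B : Type*} [Finite A] [Finite B]
    [DecidableEq G] {J : Type*} [Preorder J] [Nonempty J] [IsDirected J (· ≤ ·)] {F : J → Finset G}
    (hF : IsFolnerNet F) {Z : Set (G → A)} {W : Set (G → B)} {E : Finset G} (hE : 1 ∈ E)
    (h : ∀ Ω : Finset G, (restrict ↑Ω '' Z).ncard ≤ (restrict ↑(Ω * E) '' W).ncard) :
    entropy F Z ≤ entropy F W := by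
  have hZ := fun j => log_ncard_restrict_image_div_card_mem_Icc Z (F j)
  have hW := fun j => log_ncard_restrict_image_div_card_mem_Icc W (F j)
  have hstep : ∀ Ω : Finset G, Real.log (restrict ↑Ω '' Z).ncard ≤
      Real.log (restrict ↑Ω '' W).ncard + Real.log (Nat.card B) * ((Ω * E) \ Ω).card := fun Ω =>
    calc Real.log (restrict ↑Ω '' Z).ncard ≤ Real.log (restrict ↑(Ω * E) '' W).ncard :=
          log_natCast_le_log_natCast (h Ω)
      _ ≤ _ := log_ncard_restrict_image_le_add W (Ω.subset_mul_left hE)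
      _ = _ := by ring
  have := atTop_neBot_iff.mpr ⟨‹Nonempty J›, ‹IsDirected J (· ≤ ·)›⟩
  refine limsup_le_limsup_of_le_add (isBoundedUnder_of ⟨0, fun j => (hZ j).1⟩)
    (isBoundedUnder_of ⟨_, fun j => (hW j).2⟩) (isBoundedUnder_of ⟨0, fun j => (hW j).1⟩)
    (by simpa using (hF.tendsto_card_mul_sdiff_div E).const_mul (Real.log (Nat.card B)))
    (Eventually.of_forall fun j => ?_)
  rw [mul_div_assoc', ← add_div]
  exact div_le_div_of_nonneg_right (hstep (F j)) (Nat.cast_nonneg _)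

def IsMemorySet {A B : Type*} (X : Set (G → A)) (τ : (G → A) → (G → B)) (M : Finset G) : Prop :=
  ∀ g : G, ∀ x ∈ X, ∀ x' ∈ X, (∀ m ∈ M, x (g * m) = x' (g * m)) → τ x g = τ x' g

section CellularAutomata

variable {A B : Type*} {X : Set (G → A)} {τ : (G → A) → (G → B)}

theorem IsCellularAutomaton.exists_isMemorySet [Finite A] [TopologicalSpace A]
    [DiscreteTopology A] [TopologicalSpace B] [DiscreteTopology B] {Y : Set (G → B)}
    (hX : IsSubshift X) (hτ : IsCellularAutomaton X Y τ) :
    ∃ M : Finset G, 1 ∈ M ∧ IsMemorySet X τ M := by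
  classical
  obtain ⟨M, hM⟩ := hX.1.isCompact.exists_finset_eq_of_continuousOn
    ((continuous_apply 1).comp_continuousOn hτ.2.1)
  refine ⟨insert 1 M, Finset.mem_insert_self 1 M, fun g x hx x' hx' hxx' => ?_⟩
  have key := hM (shift g⁻¹ x) (hX.2 _ x hx) (shift g⁻¹ x') (hX.2 _ x' hx') fun m hm => by
    simpa [shift] using hxx' m (Finset.mem_insert_of_mem hm)
  rw [Function.comp_apply, Function.comp_apply, hτ.2.2 _ x hx, hτ.2.2 _ x' hx'] at key
  simpa [shift] using key

theorem IsMemorySet.eqOn_compl_mul_inv {M : Finset G} (hM : IsMemorySet X τ M) {x x' : G → A}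
    (hx : x ∈ X) (hx' : x' ∈ X) {N : Set G} (h : EqOn x x' Nᶜ) :
    EqOn (τ x) (τ x') (N * (↑M)⁻¹)ᶜ := fun g hg =>
  hM g x hx x' hx' fun m hm => h fun hgm => hg ⟨g * m, hgm, m⁻¹, inv_mem_inv.mpr hm, by group⟩

theorem IsMemorySet.ncard_restrict_image_le [DecidableEq G] [Finite A] {M : Finset G}
    (hM : IsMemorySet X τ M) (Ω : Finset G) :
    (restrict ↑Ω '' (τ '' X)).ncard ≤ (restrict ↑(Ω * M) '' X).ncard := by
  rw [← image_comp]
  refine ncard_image_le_of_factorsThrough (toFinite _) fun x hx x' hx' hxx' =>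
    funext fun g => hM g x hx x' hx' fun m hm => ?_
  exact congrFun hxx' ⟨g * m, Finset.mul_mem_mul g.2 hm⟩

theorem DeltaIrreducible.mono {Δ Δ' : Finset G} (h : DeltaIrreducible Δ X) (hΔ : Δ ⊆ Δ') :
    DeltaIrreducible Δ' X := by
  refine fun Ω₁ Ω₂ hdisj => h Ω₁ Ω₂ (subset_eq_empty (inter_subset_inter_left _ ?_) hdisj)
  rintro g ⟨d, hd, hgd⟩
  exact ⟨d, hΔ hd, hgd⟩

theorem DeltaIrreducible.exists_eqOn_of_isClosed [Finite A] [TopologicalSpace A]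
    [DiscreteTopology A] {Δ : Finset G} (hΔ : DeltaIrreducible Δ X) (hXc : IsClosed X)
    (Ω : Finset G) {x₁ x₀ : G → A} (hx₁ : x₁ ∈ X) (hx₀ : x₀ ∈ X) :
    ∃ x ∈ X, EqOn x x₁ Ω ∧ EqOn x x₀ (plusNbhd ↑Ω ↑Δ)ᶜ := by
  classical
  set N := plusNbhd (Ω : Set G) (Δ : Set G)
  have hK : IsCompact (X ∩ (Ω : Set G).pi fun g => {x₁ g}) :=
    (hXc.inter (isClosed_set_pi fun g _ => isClosed_singleton)).isCompact
  obtain ⟨x, ⟨hxX, hxΩ⟩, hxN⟩ := hK.inter_iInter_nonempty (fun g : ↥Nᶜ => {x | x g = x₀ g})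
    (fun g => isClosed_eq (continuous_apply _) continuous_const) fun u => by
      have hdisj : N ∩ ↑(u.map (Function.Embedding.subtype _)) = ∅ := by
        rw [eq_empty_iff_forall_notMem]
        rintro g ⟨hgN, hgu⟩
        obtain ⟨g', -, rfl⟩ := Finset.mem_map.mp hgu
        exact g'.2 hgN
      obtain ⟨x, hxX, hxΩ, hxu⟩ := hΔ Ω _ hdisj x₁ hx₁ x₀ hx₀
      exact ⟨x, ⟨hxX, hxΩ⟩, mem_iInter₂.mpr fun g hg => hxu g (Finset.mem_map_of_mem _ hg)⟩
  exact ⟨x, hxX, hxΩ, fun g hg => mem_iInter.mp hxN ⟨g, hg⟩⟩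

theorem ncard_restrict_le_ncard_restrict_image [DecidableEq G] [Finite A] [Finite B]
    [TopologicalSpace A] [DiscreteTopology A] {Δ M : Finset G} (hXc : IsClosed X)
    (hΔ : DeltaIrreducible Δ X) (hM : IsMemorySet X τ M) (hpre : PreInjective X τ)
    (Ω : Finset G) :
    (restrict ↑Ω '' X).ncard ≤ (restrict ↑(Ω * (Δ⁻¹ * M⁻¹)) '' (τ '' X)).ncard := by
  rcases X.eq_empty_or_nonempty with rfl | ⟨x₀, hx₀⟩
  · simp
  set N := plusNbhd (Ω : Set G) (Δ : Set G)
  have hN : N = ↑(Ω * Δ⁻¹) := by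
    rw [Finset.coe_mul, Finset.coe_inv]
    exact plusNbhd_eq_mul_inv _ _
  set K : Set G := ↑(Ω * (Δ⁻¹ * M⁻¹))
  have hK : K = N * (↑M)⁻¹ := by
    rw [hN, ← Finset.coe_inv, ← Finset.coe_mul, mul_assoc]
  set X₀ := {x ∈ X | EqOn x x₀ Nᶜ}
  have hglue : restrict (Ω : Set G) '' X ⊆ restrict (Ω : Set G) '' X₀ := by
    rintro _ ⟨x₁, hx₁, rfl⟩
    obtain ⟨x, hxX, hxΩ, hxN⟩ := hΔ.exists_eqOn_of_isClosed hXc Ω hx₁ hx₀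
    exact ⟨x, ⟨hxX, hxN⟩, funext fun g => hxΩ g.2⟩
  have hdet : ∀ x ∈ X₀, ∀ x' ∈ X₀,
      restrict K (τ x) = restrict K (τ x') → restrict (Ω : Set G) x = restrict (Ω : Set G) x' := by
    intro x hx x' hx' hxx'
    have hout := hM.eqOn_compl_mul_inv hx.1 hx'.1 (hx.2.trans hx'.2.symm)
    have hτ : τ x = τ x' := funext fun g => by
      by_cases hg : g ∈ K
      · exact congrFun hxx' ⟨g, hg⟩
      · exact hout (hK ▸ hg)
    have hfin : {g | x g ≠ x' g}.Finite := (hN ▸ (Ω * Δ⁻¹).finite_toSet).subset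
      fun g hg => by_contra fun hgN => hg ((hx.2 hgN).trans (hx'.2 hgN).symm)
    rw [hpre x hx.1 x' hx'.1 hfin hτ]
  calc (restrict (Ω : Set G) '' X).ncard ≤ (restrict (Ω : Set G) '' X₀).ncard :=
        ncard_le_ncard hglue (toFinite _)
    _ ≤ ((restrict K ∘ τ) '' X₀).ncard := ncard_image_le_of_factorsThrough (toFinite _) hdet
    _ ≤ (restrict K '' (τ '' X)).ncard := by
        rw [image_comp]
        exact ncard_le_ncard (image_mono (image_mono fun x hx => hx.1)) (toFinite _)

end CellularAutomata

theorem entropy_image_eq_of_preInjective_general {A B : Type*} [Fintype A] [Fintype B]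
    [TopologicalSpace A] [DiscreteTopology A] [TopologicalSpace B] [DiscreteTopology B]
    {J : Type*} [Nonempty J] [Preorder J] [IsDirected J (· ≤ ·)]
    (F : J → Finset G) (hF : IsFolnerNet F)
    (X : Set (G → A)) (hX : IsSubshift X) (hSI : StronglyIrreducible X)
    (Y : Set (G → B))
    (τ : (G → A) → (G → B)) (hτ : IsCellularAutomaton X Y τ)
    (hpre : PreInjective X τ) :
    entropy F (τ '' X) = entropy F X := by
  classical
  obtain ⟨Δ, hΔ⟩ := hSI
  obtain ⟨M, hM1, hM⟩ := hτ.exists_isMemorySet hX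
  have h1 : (1 : G) ∈ (insert 1 Δ)⁻¹ * M⁻¹ := by
    simpa using Finset.mul_mem_mul (Finset.inv_mem_inv (Finset.mem_insert_self 1 Δ))
      (Finset.inv_mem_inv hM1)
  exact le_antisymm (entropy_le_entropy_of_ncard_restrict_le hF hM1 hM.ncard_restrict_image_le)
    (entropy_le_entropy_of_ncard_restrict_le hF h1 <|
      ncard_restrict_le_ncard_restrict_image hX.1 (hΔ.mono (Finset.subset_insert 1 Δ)) hM hpre)

/-- A pre-injective cellular automaton on a strongly irreducible subshift
preserves entropy. -/
theorem entropy_image_eq_of_preInjective {A B : Type*} [Fintype A] [Fintype B]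
    [TopologicalSpace A] [DiscreteTopology A] [TopologicalSpace B] [DiscreteTopology B]
    {J : Type*} [Nonempty J] [Preorder J] [IsDirected J (· ≤ ·)]
    (F : J → Finset G) (hF : IsFolnerNet F)
    (X : Set (G → A)) (hX : IsSubshift X) (hSI : StronglyIrreducible X)
    (Y : Set (G → B)) (hY : IsSubshift Y)
    (τ : (G → A) → (G → B)) (hτ : IsCellularAutomaton X Y τ)
    (hpre : PreInjective X τ) :
    entropy F (τ '' X) = entropy F X :=
  entropy_image_eq_of_preInjective_general F hF X hX hSI Y τ hτ hpre
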